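/- Suppose f : [0,1]² → ℝ is Lipschitz continuous with f(x,y) > 0 for all (x,y), and λ : [0,1] → ℝ is nonnegative and integrable. If there exists n₀ ∈ ℕ with ρ̄^{n₀} ≥ ρ*, then for every pair of partitions 0 = w_0 < w_1 < ⋯ < w_H = 1 and 0 = v_0 < v_1 < ⋯ < v_M = 1 of [0,1] and every H×M stochastic matrix p, one has max_{m} Σ_{h=1}^H p_{h,m} λ_h / ((v_m − v_{m−1}) μ*_{h,m}) ≥ ρ*, where λ_h = ∫_{w_{h−1}}^{w_h} λ(x) dx and μ*_{h,m} = min of f on [w_{h−1}, w_h] × [v_{m−1}, v_m]. -/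

import Mathlib

open MeasureTheory Set Finset

/-- Integral of the arrival rate function over the `h`-th dyadic subinterval of
`[0,1]` at level `n`: `λ^{(n)}_h = ∫_{h/2ⁿ}^{(h+1)/2ⁿ} λ(x) dx`. -/
noncomputable def lamDyadic (lam : ℝ → ℝ) (n : ℕ) (h : Fin (2 ^ n)) : ℝ :=
  ∫ x in (((h : ℕ) : ℝ) / 2 ^ n)..((((h : ℕ) : ℝ) + 1) / 2 ^ n), lam x

/-- Maximum of `f` on the dyadic square, realized as the `sSup` of the image. -/
noncomputable def muHatDyadic (f : ℝ × ℝ → ℝ) (n : ℕ) (h m : Fin (2 ^ n)) : ℝ :=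
  sSup (f '' (Icc (((h : ℕ) : ℝ) / 2 ^ n) ((((h : ℕ) : ℝ) + 1) / 2 ^ n) ×ˢ
              Icc (((m : ℕ) : ℝ) / 2 ^ n) ((((m : ℕ) : ℝ) + 1) / 2 ^ n)))

/-- A matrix with entries in `[0,1]` and unit row sums. -/
def IsStochastic {H M : ℕ} (p : Fin H → Fin M → ℝ) : Prop :=
  (∀ h m, 0 ≤ p h m ∧ p h m ≤ 1) ∧ ∀ h, ∑ m, p h m = 1

/-- `ρ̄ⁿ`: infimum over `2ⁿ×2ⁿ` stochastic matrices of the worst-case load with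
maximal (best-case) service rates. -/
noncomputable def rhoBar (f : ℝ × ℝ → ℝ) (lam : ℝ → ℝ) (n : ℕ) : ℝ :=
  sInf { r : ℝ | ∃ p : Fin (2 ^ n) → Fin (2 ^ n) → ℝ, IsStochastic p ∧
    r = ⨆ m : Fin (2 ^ n), ∑ h : Fin (2 ^ n),
      (2 ^ n : ℝ) * lamDyadic lam n h * p h m / muHatDyadic f n h m }

/-! Fix partitions `w`, `v`, a routing matrix `p` and the dyadic level `n₀`. Route the mass of
each dyadic strip first to the `w`-cells in proportion to the `λ`-mass of the overlaps, then by
`p`, and finally to the dyadic columns in proportion to the lengths of the overlaps with the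
`v`-cells. The result is a dyadic stochastic matrix `q`, and only pairs of cells that overlap
carry mass. On such a pair `μ*` of the coarse cell is at most `f` at a common point, hence at most
`μ̂` of the dyadic square, so every dyadic column of `q` has load at most a convex combination of
the loads of `(w, v, p)`. Hence `ρ* ≤ ρ̄^{n₀} ≤` the maximal load. -/

namespace IsStochastic

variable {H M K : ℕ}

lemma of_nonneg_of_sum_eq_one {p : Fin H → Fin M → ℝ} (hp : ∀ h m, 0 ≤ p h m)
    (hsum : ∀ h, ∑ m, p h m = 1) : IsStochastic p :=
  ⟨fun h m => ⟨hp h m, hsum h ▸ single_le_sum (fun m _ => hp h m) (mem_univ m)⟩, hsum⟩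

lemma mul {a : Fin H → Fin M → ℝ} {b : Fin M → Fin K → ℝ} (ha : IsStochastic a)
    (hb : IsStochastic b) : IsStochastic fun h k => ∑ m, a h m * b m k :=
  of_nonneg_of_sum_eq_one
    (fun h k => sum_nonneg fun m _ => mul_nonneg (ha.1 h m).1 (hb.1 m k).1)
    fun h => by rw [sum_comm]; simp only [← mul_sum, hb.2, mul_one, ha.2]

end IsStochastic

noncomputable def normalizeRows {N H : ℕ} [NeZero H] (a : Fin N → Fin H → ℝ) :
    Fin N → Fin H → ℝ :=
  fun i => if ∑ k, a i k = 0 then Pi.single 0 1 else fun j => a i j / ∑ k, a i k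

section normalizeRows

variable {N H : ℕ} [NeZero H] {a : Fin N → Fin H → ℝ}

lemma isStochastic_normalizeRows (ha : ∀ i j, 0 ≤ a i j) : IsStochastic (normalizeRows a) := by
  refine IsStochastic.of_nonneg_of_sum_eq_one (fun i j => ?_) fun i => ?_ <;>
    unfold normalizeRows <;> split_ifs with h
  · by_cases hj : j = 0 <;> simp [hj]
  · exact div_nonneg (ha i j) (sum_nonneg fun k _ => ha i k)
  · simp
  · rw [← sum_div, div_self h]

lemma sum_mul_normalizeRows (ha : ∀ i j, 0 ≤ a i j) (i : Fin N) (j : Fin H) :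
    (∑ k, a i k) * normalizeRows a i j = a i j := by
  unfold normalizeRows
  split_ifs with h
  · rw [h, zero_mul]
    exact ((sum_eq_zero_iff_of_nonneg fun k _ => ha i k).1 h j (mem_univ j)).symm
  · exact mul_div_cancel₀ _ h

end normalizeRows

lemma div_le_div_of_nonneg_left_of_ne_zero {a b x : ℝ} (hx : 0 ≤ x) (hb : 0 < b)
    (hba : x ≠ 0 → b ≤ a) : x / a ≤ x / b := by
  rcases hx.eq_or_lt' with rfl | hx'
  · simp
  · exact div_le_div_of_nonneg_left hx hb (hba hx'.ne')

section refinement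

variable {N N' H M : ℕ} {α : Fin N → Fin H → ℝ} {β : Fin N' → Fin M → ℝ} {Λ' : Fin N → ℝ}
  {Λ : Fin H → ℝ} {ℓ' : Fin N' → ℝ} {ℓ : Fin M → ℝ} {μhat : Fin N → Fin N' → ℝ}
  {μstar : Fin H → Fin M → ℝ} {p : Fin H → Fin M → ℝ}

lemma load_mul_le_of_refinement {Px : Fin N → Fin H → ℝ} {Py : Fin M → Fin N' → ℝ}
    (hα : ∀ i' i, 0 ≤ α i' i) (hp : ∀ i j, 0 ≤ p i j) (hPy_nonneg : ∀ j j', 0 ≤ Py j j')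
    (hPx : ∀ i' i, Λ' i' * Px i' i = α i' i) (hPy : ∀ j j', ℓ j * Py j j' = β j' j)
    (hΛ : ∀ i, ∑ i', α i' i = Λ i) (hℓ' : ∀ j', ∑ j, β j' j = ℓ' j')
    (hℓ'pos : ∀ j', 0 < ℓ' j') (hℓpos : ∀ j, 0 < ℓ j) (hμstar : ∀ i j, 0 < μstar i j)
    (hμ : ∀ i' i j' j, α i' i ≠ 0 → β j' j ≠ 0 → μstar i j ≤ μhat i' j') (j' : Fin N') :
    ∑ i', Λ' i' * (∑ j, (∑ i, Px i' i * p i j) * Py j j') / (ℓ' j' * μhat i' j') ≤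
      ⨆ j, ∑ i, p i j * Λ i / (ℓ j * μstar i j) := by
  set S := ⨆ j, ∑ i, p i j * Λ i / (ℓ j * μstar i j)
  have hS : ∀ j, ∑ i, p i j * Λ i / (ℓ j * μstar i j) ≤ S := le_ciSup (Finite.bddAbove_range _)
  calc ∑ i', Λ' i' * (∑ j, (∑ i, Px i' i * p i j) * Py j j') / (ℓ' j' * μhat i' j')
      = ∑ i', ∑ i, ∑ j, α i' i * p i j * Py j j' / (ℓ' j' * μhat i' j') := by
        refine sum_congr rfl fun i' _ => ?_
        simp_rw [sum_mul, mul_sum, sum_div]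
        rw [sum_comm]
        refine sum_congr rfl fun i _ => sum_congr rfl fun j _ => ?_
        rw [← hPx]
        ring
    _ ≤ ∑ i', ∑ i, ∑ j, α i' i * p i j * Py j j' / (ℓ' j' * μstar i j) := by
        refine sum_le_sum fun i' _ => sum_le_sum fun i _ => sum_le_sum fun j _ =>
          div_le_div_of_nonneg_left_of_ne_zero
            (mul_nonneg (mul_nonneg (hα i' i) (hp i j)) (hPy_nonneg j j'))
            (mul_pos (hℓ'pos j') (hμstar i j)) fun hne => ?_
        have hβ : β j' j ≠ 0 := hPy j j' ▸ mul_ne_zero (hℓpos j).ne' (right_ne_zero_of_mul hne)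
        exact mul_le_mul_of_nonneg_left
          (hμ i' i j' j (left_ne_zero_of_mul (left_ne_zero_of_mul hne)) hβ) (hℓ'pos j').le
    _ = ∑ i, ∑ j, Λ i * p i j * Py j j' / (ℓ' j' * μstar i j) := by
        rw [sum_comm]
        refine sum_congr rfl fun i _ => ?_
        rw [sum_comm]
        refine sum_congr rfl fun j _ => ?_
        rw [← hΛ i, sum_mul, sum_mul, sum_div]
    _ = ∑ j, β j' j / ℓ' j' * ∑ i, p i j * Λ i / (ℓ j * μstar i j) := by
        rw [sum_comm]
        refine sum_congr rfl fun j _ => ?_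
        rw [mul_sum]
        refine sum_congr rfl fun i _ => ?_
        rw [← hPy]
        field_simp [(hℓpos j).ne']
    _ ≤ ∑ j, β j' j / ℓ' j' * S := by
        gcongr with j
        · exact div_nonneg (hPy j j' ▸ mul_nonneg (hℓpos j).le (hPy_nonneg j j')) (hℓ'pos j').le
        · exact hS j
    _ = S := by rw [← sum_mul, ← sum_div, hℓ', div_self (hℓ'pos j').ne', one_mul]

theorem exists_isStochastic_load_le_of_refinement [NeZero H] [NeZero N']
    (hα : ∀ i' i, 0 ≤ α i' i) (hβ : ∀ j' j, 0 ≤ β j' j)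
    (hΛ' : ∀ i', ∑ i, α i' i = Λ' i') (hΛ : ∀ i, ∑ i', α i' i = Λ i)
    (hℓ' : ∀ j', ∑ j, β j' j = ℓ' j') (hℓ : ∀ j, ∑ j', β j' j = ℓ j)
    (hℓ'pos : ∀ j', 0 < ℓ' j') (hℓpos : ∀ j, 0 < ℓ j) (hμstar : ∀ i j, 0 < μstar i j)
    (hμ : ∀ i' i j' j, α i' i ≠ 0 → β j' j ≠ 0 → μstar i j ≤ μhat i' j')
    (hp : IsStochastic p) :
    ∃ q, IsStochastic q ∧ ∀ j', ∑ i', Λ' i' * q i' j' / (ℓ' j' * μhat i' j') ≤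
      ⨆ j, ∑ i, p i j * Λ i / (ℓ j * μstar i j) := by
  have hβT : ∀ j j', 0 ≤ β j' j := fun j j' => hβ j' j
  -- `q = normalizeRows α * p * normalizeRows βᵀ`
  exact ⟨_, ((isStochastic_normalizeRows hα).mul hp).mul (isStochastic_normalizeRows hβT),
    load_mul_le_of_refinement hα (fun i j => (hp.1 i j).1)
      (fun j j' => ((isStochastic_normalizeRows hβT).1 j j').1)
      (fun i' i => hΛ' i' ▸ sum_mul_normalizeRows hα i' i)
      (fun j j' => hℓ j ▸ sum_mul_normalizeRows hβT j j') hΛ hℓ' hℓ'pos hℓpos hμstar hμ⟩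

end refinement

lemma sum_setIntegral_inter_Ioc {K : ℕ} {g : Fin (K + 1) → ℝ} (hg : Monotone g) {s : Set ℝ}
    (hs : MeasurableSet s) {φ : ℝ → ℝ} (hφ : IntegrableOn φ (s ∩ Ioc (g 0) (g (Fin.last K)))) :
    ∑ i : Fin K, ∫ x in s ∩ Ioc (g i.castSucc) (g i.succ), φ x =
      ∫ x in s ∩ Ioc (g 0) (g (Fin.last K)), φ x := by
  induction K with
  | zero => simp
  | succ K ih =>
    have hmid : g 0 ≤ g (Fin.last K).castSucc := hg (Fin.zero_le _)
    have hlast : g (Fin.last K).castSucc ≤ g (Fin.last (K + 1)) := hg (Fin.le_last _)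
    have hsplit : s ∩ Ioc (g 0) (g (Fin.last (K + 1))) =
        s ∩ Ioc (g 0) (g (Fin.last K).castSucc) ∪
          s ∩ Ioc (g (Fin.last K).castSucc) (g (Fin.last (K + 1))) := by
      rw [← inter_union_distrib_left, Ioc_union_Ioc_eq_Ioc hmid hlast]
    rw [hsplit] at hφ
    rw [Fin.sum_univ_castSucc, hsplit, setIntegral_union
      ((Set.Ioc_disjoint_Ioc_of_le le_rfl).mono Set.inter_subset_right Set.inter_subset_right)
      (hs.inter measurableSet_Ioc) hφ.left_of_union hφ.right_of_union, Fin.succ_last]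
    congr 1
    simpa only [Function.comp_apply, Fin.succ_castSucc, Fin.castSucc_zero] using
      ih (g := g ∘ Fin.castSucc) (hg.comp Fin.strictMono_castSucc.monotone) hφ.left_of_union

def IsUnitIntervalPartition {K : ℕ} (g : Fin (K + 1) → ℝ) : Prop :=
  StrictMono g ∧ g 0 = 0 ∧ g (Fin.last K) = 1

namespace IsUnitIntervalPartition

variable {K : ℕ} {g : Fin (K + 1) → ℝ}

lemma neZero (hg : IsUnitIntervalPartition g) : NeZero K :=
  ⟨by rintro rfl; simpa [hg.2.1] using hg.2.2⟩

lemma mem_Icc (hg : IsUnitIntervalPartition g) (k : Fin (K + 1)) : g k ∈ Icc (0 : ℝ) 1 :=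
  ⟨hg.2.1 ▸ hg.1.monotone (Fin.zero_le k), hg.2.2 ▸ hg.1.monotone (Fin.le_last k)⟩

lemma castSucc_lt_succ (hg : IsUnitIntervalPartition g) (i : Fin K) :
    g i.castSucc < g i.succ :=
  hg.1 Fin.castSucc_lt_succ

lemma Icc_subset (hg : IsUnitIntervalPartition g) (i : Fin K) :
    Icc (g i.castSucc) (g i.succ) ⊆ Icc (0 : ℝ) 1 :=
  Icc_subset_Icc (hg.mem_Icc _).1 (hg.mem_Icc _).2

lemma Ioc_subset (hg : IsUnitIntervalPartition g) (i : Fin K) :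
    Ioc (g i.castSucc) (g i.succ) ⊆ Ioc (0 : ℝ) 1 :=
  Ioc_subset_Ioc (hg.mem_Icc _).1 (hg.mem_Icc _).2

end IsUnitIntervalPartition

noncomputable def overlapIntegral {K K' : ℕ} (φ : ℝ → ℝ) (g : Fin (K + 1) → ℝ)
    (g' : Fin (K' + 1) → ℝ) (i : Fin K) (j : Fin K') : ℝ :=
  ∫ x in Ioc (g i.castSucc) (g i.succ) ∩ Ioc (g' j.castSucc) (g' j.succ), φ x

section overlapIntegral

variable {K K' : ℕ} {g : Fin (K + 1) → ℝ} {g' : Fin (K' + 1) → ℝ} {φ : ℝ → ℝ}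

lemma overlapIntegral_comm (φ : ℝ → ℝ) (g : Fin (K + 1) → ℝ) (g' : Fin (K' + 1) → ℝ)
    (i : Fin K) (j : Fin K') : overlapIntegral φ g g' i j = overlapIntegral φ g' g j i := by
  rw [overlapIntegral, overlapIntegral, inter_comm]

lemma sum_overlapIntegral_right (hg : IsUnitIntervalPartition g)
    (hg' : IsUnitIntervalPartition g') (hφ : IntegrableOn φ (Ioc (0 : ℝ) 1)) (i : Fin K) :
    ∑ j, overlapIntegral φ g g' i j = ∫ x in g i.castSucc..g i.succ, φ x := by
  have hcell := hg.Ioc_subset i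
  rw [← hg'.2.1, ← hg'.2.2] at hcell hφ
  rw [intervalIntegral.integral_of_le (hg.castSucc_lt_succ i).le, ← inter_eq_left.2 hcell]
  exact sum_setIntegral_inter_Ioc hg'.1.monotone measurableSet_Ioc
    (hφ.mono_set Set.inter_subset_right)

lemma sum_overlapIntegral_left (hg : IsUnitIntervalPartition g)
    (hg' : IsUnitIntervalPartition g') (hφ : IntegrableOn φ (Ioc (0 : ℝ) 1)) (j : Fin K') :
    ∑ i, overlapIntegral φ g g' i j = ∫ x in g' j.castSucc..g' j.succ, φ x := by
  simp_rw [overlapIntegral_comm φ g]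
  exact sum_overlapIntegral_right hg' hg hφ j

lemma overlapIntegral_nonneg (hg : IsUnitIntervalPartition g) (hφ : ∀ x ∈ Icc (0 : ℝ) 1, 0 ≤ φ x)
    (i : Fin K) (j : Fin K') : 0 ≤ overlapIntegral φ g g' i j :=
  setIntegral_nonneg (measurableSet_Ioc.inter measurableSet_Ioc) fun _ hx =>
    hφ _ (Ioc_subset_Icc_self (hg.Ioc_subset i hx.1))

lemma nonempty_of_overlapIntegral_ne_zero {i : Fin K} {j : Fin K'}
    (h : overlapIntegral φ g g' i j ≠ 0) :
    (Icc (g i.castSucc) (g i.succ) ∩ Icc (g' j.castSucc) (g' j.succ)).Nonempty :=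
  (Set.nonempty_iff_ne_empty.2 fun he => h (by rw [overlapIntegral, he, setIntegral_empty])).mono
    (inter_subset_inter Ioc_subset_Icc_self Ioc_subset_Icc_self)

end overlapIntegral

def cellRect {K K' : ℕ} (g : Fin (K + 1) → ℝ) (g' : Fin (K' + 1) → ℝ) (i : Fin K) (j : Fin K') :
    Set (ℝ × ℝ) :=
  Icc (g i.castSucc) (g i.succ) ×ˢ Icc (g' j.castSucc) (g' j.succ)

section cellRect

variable {K K' : ℕ} {g : Fin (K + 1) → ℝ} {g' : Fin (K' + 1) → ℝ}

lemma isCompact_cellRect (g : Fin (K + 1) → ℝ) (g' : Fin (K' + 1) → ℝ) (i : Fin K) (j : Fin K') :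
    IsCompact (cellRect g g' i j) :=
  isCompact_Icc.prod isCompact_Icc

lemma cellRect_nonempty (hg : IsUnitIntervalPartition g) (hg' : IsUnitIntervalPartition g')
    (i : Fin K) (j : Fin K') : (cellRect g g' i j).Nonempty :=
  (Set.nonempty_Icc.2 (hg.castSucc_lt_succ i).le).prod
    (Set.nonempty_Icc.2 (hg'.castSucc_lt_succ j).le)

lemma cellRect_subset (hg : IsUnitIntervalPartition g) (hg' : IsUnitIntervalPartition g')
    (i : Fin K) (j : Fin K') : cellRect g g' i j ⊆ Icc (0 : ℝ) 1 ×ˢ Icc (0 : ℝ) 1 :=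
  prod_mono (hg.Icc_subset i) (hg'.Icc_subset j)

end cellRect

lemma IsCompact.sInf_image_pos {α : Type*} [TopologicalSpace α] {f : α → ℝ} {s : Set α}
    (hs : IsCompact s) (hne : s.Nonempty) (hf : ContinuousOn f s) (hpos : ∀ z ∈ s, 0 < f z) :
    0 < sInf (f '' s) := by
  obtain ⟨z, hz, hz_eq⟩ := (hs.image_of_continuousOn hf).sInf_mem (hne.image f)
  exact hz_eq ▸ hpos z hz

lemma sInf_image_cellRect_le_sSup {N N' H M : ℕ} {g : Fin (N + 1) → ℝ} {g' : Fin (N' + 1) → ℝ}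
    {w : Fin (H + 1) → ℝ} {v : Fin (M + 1) → ℝ} (hg : IsUnitIntervalPartition g)
    (hg' : IsUnitIntervalPartition g') (hw : IsUnitIntervalPartition w)
    (hv : IsUnitIntervalPartition v) {f : ℝ × ℝ → ℝ}
    (hf : ContinuousOn f (Icc (0 : ℝ) 1 ×ˢ Icc (0 : ℝ) 1))
    {φ ψ : ℝ → ℝ} {i' : Fin N} {j' : Fin N'} {i : Fin H} {j : Fin M}
    (hx : overlapIntegral φ g w i' i ≠ 0) (hy : overlapIntegral ψ g' v j' j ≠ 0) :
    sInf (f '' cellRect w v i j) ≤ sSup (f '' cellRect g g' i' j') := by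
  obtain ⟨x, hxg, hxw⟩ := nonempty_of_overlapIntegral_ne_zero hx
  obtain ⟨y, hyg', hyv⟩ := nonempty_of_overlapIntegral_ne_zero hy
  calc sInf (f '' cellRect w v i j) ≤ f (x, y) :=
        csInf_le ((isCompact_cellRect w v i j).bddBelow_image (hf.mono (cellRect_subset hw hv i j)))
          (mem_image_of_mem f ⟨hxw, hyv⟩)
    _ ≤ sSup (f '' cellRect g g' i' j') :=
        le_csSup ((isCompact_cellRect g g' i' j').bddAbove_image
          (hf.mono (cellRect_subset hg hg' i' j'))) (mem_image_of_mem f ⟨hxg, hyg'⟩)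

theorem exists_isStochastic_load_le {N N' H M : ℕ} {g : Fin (N + 1) → ℝ}
    {g' : Fin (N' + 1) → ℝ} {w : Fin (H + 1) → ℝ} {v : Fin (M + 1) → ℝ}
    (hg : IsUnitIntervalPartition g) (hg' : IsUnitIntervalPartition g')
    (hw : IsUnitIntervalPartition w) (hv : IsUnitIntervalPartition v) {f : ℝ × ℝ → ℝ}
    (hf : ContinuousOn f (Icc (0 : ℝ) 1 ×ˢ Icc (0 : ℝ) 1))
    (hfpos : ∀ z ∈ Icc (0 : ℝ) 1 ×ˢ Icc (0 : ℝ) 1, 0 < f z)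
    {lam : ℝ → ℝ} (hlam : ∀ x ∈ Icc (0 : ℝ) 1, 0 ≤ lam x) (hint : IntegrableOn lam (Ioc (0 : ℝ) 1))
    {p : Fin H → Fin M → ℝ} (hp : IsStochastic p) :
    ∃ q, IsStochastic q ∧ ∀ j', ∑ i', (∫ x in g i'.castSucc..g i'.succ, lam x) * q i' j' /
        ((g' j'.succ - g' j'.castSucc) * sSup (f '' cellRect g g' i' j')) ≤
      ⨆ j, ∑ i, p i j * (∫ x in w i.castSucc..w i.succ, lam x) /
        ((v j.succ - v j.castSucc) * sInf (f '' cellRect w v i j)) := by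
  have := hw.neZero
  have := hg'.neZero
  have hone : IntegrableOn (fun _ => (1 : ℝ)) (Ioc (0 : ℝ) 1) :=
    integrableOn_const measure_Ioc_lt_top.ne
  exact exists_isStochastic_load_le_of_refinement (α := overlapIntegral lam g w)
    (β := overlapIntegral (fun _ => 1) g' v)
    (fun i' i => overlapIntegral_nonneg hg hlam i' i)
    (fun j' j => overlapIntegral_nonneg hg' (fun _ _ => zero_le_one) j' j)
    (sum_overlapIntegral_right hg hw hint) (sum_overlapIntegral_left hg hw hint)
    (fun j' => by rw [sum_overlapIntegral_right hg' hv hone, integral_one])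
    (fun j => by rw [sum_overlapIntegral_left hg' hv hone, integral_one])
    (fun j' => sub_pos.2 (hg'.castSucc_lt_succ j')) (fun j => sub_pos.2 (hv.castSucc_lt_succ j))
    (fun i j => (isCompact_cellRect w v i j).sInf_image_pos (cellRect_nonempty hw hv i j)
      (hf.mono (cellRect_subset hw hv i j)) fun z hz => hfpos z (cellRect_subset hw hv i j hz))
    (fun _ _ _ _ hx hy => sInf_image_cellRect_le_sSup hg hg' hw hv hf hx hy) hp

noncomputable def dyadicGrid (n : ℕ) : Fin (2 ^ n + 1) → ℝ := fun k => (k : ℝ) / 2 ^ n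

section dyadicGrid

variable {n : ℕ}

lemma isUnitIntervalPartition_dyadicGrid (n : ℕ) : IsUnitIntervalPartition (dyadicGrid n) :=
  ⟨fun a b hab => by unfold dyadicGrid; gcongr; exact_mod_cast hab, by simp [dyadicGrid],
    by simp [dyadicGrid]⟩

lemma dyadicGrid_castSucc (k : Fin (2 ^ n)) : dyadicGrid n k.castSucc = (k : ℝ) / 2 ^ n := rfl

lemma dyadicGrid_succ (k : Fin (2 ^ n)) : dyadicGrid n k.succ = ((k : ℝ) + 1) / 2 ^ n := by
  simp [dyadicGrid]

lemma dyadicGrid_succ_sub_castSucc (k : Fin (2 ^ n)) :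
    dyadicGrid n k.succ - dyadicGrid n k.castSucc = ((2 : ℝ) ^ n)⁻¹ := by
  rw [dyadicGrid_succ, dyadicGrid_castSucc]
  ring

lemma lamDyadic_eq (lam : ℝ → ℝ) (h : Fin (2 ^ n)) :
    lamDyadic lam n h = ∫ x in dyadicGrid n h.castSucc..dyadicGrid n h.succ, lam x := by
  rw [dyadicGrid_castSucc, dyadicGrid_succ, lamDyadic]

lemma muHatDyadic_eq (f : ℝ × ℝ → ℝ) (h m : Fin (2 ^ n)) :
    muHatDyadic f n h m = sSup (f '' cellRect (dyadicGrid n) (dyadicGrid n) h m) := by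
  rw [cellRect, dyadicGrid_castSucc, dyadicGrid_castSucc, dyadicGrid_succ, dyadicGrid_succ,
    muHatDyadic]

lemma lamDyadic_nonneg {lam : ℝ → ℝ} (hlam : ∀ x ∈ Icc (0 : ℝ) 1, 0 ≤ lam x) (h : Fin (2 ^ n)) :
    0 ≤ lamDyadic lam n h := by
  have hA := isUnitIntervalPartition_dyadicGrid n
  rw [lamDyadic_eq]
  exact intervalIntegral.integral_nonneg (hA.castSucc_lt_succ h).le fun x hx =>
    hlam x (hA.Icc_subset h hx)

lemma muHatDyadic_nonneg {f : ℝ × ℝ → ℝ} (hf : ∀ z ∈ Icc (0 : ℝ) 1 ×ˢ Icc (0 : ℝ) 1, 0 ≤ f z)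
    (h m : Fin (2 ^ n)) : 0 ≤ muHatDyadic f n h m := by
  have hA := isUnitIntervalPartition_dyadicGrid n
  rw [muHatDyadic_eq]
  exact Real.sSup_nonneg (forall_mem_image.2 fun z hz => hf z (cellRect_subset hA hA h m hz))

end dyadicGrid

lemma rhoBar_le {f : ℝ × ℝ → ℝ} {lam : ℝ → ℝ} {n : ℕ} (hlam : ∀ h, 0 ≤ lamDyadic lam n h)
    (hf : ∀ h m, 0 ≤ muHatDyadic f n h m) {q : Fin (2 ^ n) → Fin (2 ^ n) → ℝ}
    (hq : IsStochastic q) :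
    rhoBar f lam n ≤ ⨆ m, ∑ h, (2 ^ n : ℝ) * lamDyadic lam n h * q h m / muHatDyadic f n h m := by
  refine csInf_le ⟨0, ?_⟩ ⟨q, hq, rfl⟩
  rintro _ ⟨p, hp, rfl⟩
  exact Real.iSup_nonneg fun m => sum_nonneg fun h _ =>
    div_nonneg (mul_nonneg (mul_nonneg (by positivity) (hlam h)) (hp.1 h m).1) (hf h m)

/-- Proposition C.1 (ii): if `ρ̄^{n₀} ≥ ρ*` for some dyadic level
`n₀`, then for every pair of partitions `(w,v)` of `[0,1]` and every stochastic
matrix `p`, the maximal load per server is at least `ρ*`. -/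
theorem stmt14 (f : ℝ × ℝ → ℝ)
    (hfLip : ∃ K : NNReal, LipschitzOnWith K f (Icc (0:ℝ) 1 ×ˢ Icc (0:ℝ) 1))
    (hfpos : ∀ z ∈ Icc (0:ℝ) 1 ×ˢ Icc (0:ℝ) 1, 0 < f z)
    (lam : ℝ → ℝ) (hlam : ∀ x ∈ Icc (0:ℝ) 1, 0 ≤ lam x)
    (hint : IntegrableOn lam (Icc 0 1))
    (rstar : ℝ) (hbar : ∃ n₀ : ℕ, rstar ≤ rhoBar f lam n₀) :
    ∀ (H M : ℕ), 0 < H → 0 < M →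
    ∀ (w : Fin (H + 1) → ℝ), w 0 = 0 → w (Fin.last H) = 1 → StrictMono w →
    ∀ (v : Fin (M + 1) → ℝ), v 0 = 0 → v (Fin.last M) = 1 → StrictMono v →
    ∀ (p : Fin H → Fin M → ℝ), IsStochastic p →
      rstar ≤ ⨆ m : Fin M, ∑ h : Fin H,
        p h m * (∫ x in (w h.castSucc)..(w h.succ), lam x) /
          ((v m.succ - v m.castSucc) *
            sInf (f '' (Icc (w h.castSucc) (w h.succ) ×ˢ
                        Icc (v m.castSucc) (v m.succ)))) := by
  intro H M _ _ w hw0 hw1 hw v hv0 hv1 hv p hp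
  obtain ⟨K, hK⟩ := hfLip
  obtain ⟨n, hn⟩ := hbar
  have hA := isUnitIntervalPartition_dyadicGrid n
  obtain ⟨q, hq, hload⟩ := exists_isStochastic_load_le hA hA ⟨hw, hw0, hw1⟩ ⟨hv, hv0, hv1⟩
    hK.continuousOn hfpos hlam (hint.mono_set Ioc_subset_Icc_self) hp
  refine hn.trans <| (rhoBar_le (lamDyadic_nonneg hlam) (muHatDyadic_nonneg fun z hz =>
    (hfpos z hz).le) hq).trans <| ciSup_le fun m => le_of_eq_of_le (sum_congr rfl fun h _ => ?_)
    (hload m)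
  rw [lamDyadic_eq, muHatDyadic_eq, dyadicGrid_succ_sub_castSucc]
  field_simp
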